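/- Fix κ ≥ 0 and let A ∈ C²(ℝ, M²) be the solution of the initial value problem Ä + κA = Λ(A,Ȧ)·cof A with data (A₀,B₀) ∈ D such that X₂ := X₂(A₀,B₀) ≠ 0, and set X₁ := X₁(A₀,B₀) (necessarily X₁ > 0). Then for all t ∈ ℝ, ½|A(t)|² − 1 ≥ X₂²/(2X₁) > 0; in particular A(t) ∉ SO(2,ℝ) for all t ∈ ℝ. -/

import Mathlib

open Matrix

noncomputable section

/-- `M²`: the space of 2×2 real matrices. -/
abbrev M2 : Type := Matrix (Fin 2) (Fin 2) ℝ

/-- Frobenius inner product `⟨A,B⟩ = tr(AᵀB)`. -/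
def mip (A B : M2) : ℝ := (Aᵀ * B).trace

/-- Frobenius norm `|A| = ⟨A,A⟩^{1/2}`. -/
def fnorm (A : M2) : ℝ := Real.sqrt (mip A A)

/-- The matrix Z = [[0,−1],[1,0]]. -/
def Zm : M2 := !![0, -1; 1, 0]

/-- The matrix K = [[1,0],[0,−1]]. -/
def Km : M2 := !![1, 0; 0, -1]

/-- The matrix M = [[0,1],[1,0]]. -/
def Mm : M2 := !![0, 1; 1, 0]

/-- Cofactor: cof [[a,b],[c,d]] = [[d,−c],[−b,a]]. -/
def cofm (A : M2) : M2 := !![A 1 1, -(A 1 0); -(A 0 1), A 0 0]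

/-- Membership in SO(2,ℝ). -/
def isSO (U : M2) : Prop := U.det = 1 ∧ U⁻¹ = Uᵀ

/-- The rotation U(θ) = cos θ·I + sin θ·Z. -/
def Um (θ : ℝ) : M2 := Real.cos θ • (1 : M2) + Real.sin θ • Zm

/-- Invariant X₁(A,B) = ½|B|² + (κ/2)|A|². -/
def X1 (κ : ℝ) (A B : M2) : ℝ := (1/2) * mip B B + (κ/2) * mip A A

/-- Invariant X₂(A,B) = ½⟨ZA − AZ, B⟩. -/
def X2 (A B : M2) : ℝ := (1/2) * mip (Zm * A - A * Zm) B

/-- Invariant X₃(A,B) = ½⟨ZA + AZ, B⟩. -/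
def X3 (A B : M2) : ℝ := (1/2) * mip (Zm * A + A * Zm) B

/-- Lagrange multiplier Λ(A,B) = 2(κ − det B)/|A|². -/
def Lam (κ : ℝ) (A B : M2) : ℝ := 2 * (κ - B.det) / (mip A A)

attribute [local instance] Matrix.normedAddCommGroup Matrix.normedSpace

/-
Write u = det A and w = ⟨Ȧ, cof A⟩ = u'. The multiplier Λ is chosen so that w' = -2κ(u - 1)
wherever A ≠ 0, while w = 0 where A = 0; so the energy w² + 2κ(u - 1)² is constant and the
constraint set D is invariant under the flow. On D the quantities X₁ and X₂ are conserved.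
If det A = 1, then with p = (a - d, b + c) one has ½|A|² - 1 = |p|²/2 and 2X₂(A,B) is the cross
product of p with (B₁₁ - B₂₂, B₁₂ + B₂₁), so Cauchy–Schwarz gives X₂² ≤ 2X₁(½|A|² - 1).
Rotations have |U|² = 2, which excludes them.
-/

lemma mip_eq_sum (A B : M2) : mip A B = ∑ i, ∑ j, A i j * B i j := by
  rw [mip, trace, Finset.sum_comm]
  simp [mul_apply]

lemma mip_eq (A B : M2) :
    mip A B = A 0 0 * B 0 0 + A 0 1 * B 0 1 + A 1 0 * B 1 0 + A 1 1 * B 1 1 := by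
  simp [mip_eq_sum, Fin.sum_univ_two, add_assoc]

lemma mip_comm (A B : M2) : mip A B = mip B A := by
  simp only [mip_eq_sum, mul_comm]

lemma mip_sub_left (A B C : M2) : mip (A - B) C = mip A C - mip B C := by
  simp [mip, Matrix.sub_mul]

lemma mip_sub_right (A B C : M2) : mip A (B - C) = mip A B - mip A C := by
  simp [mip, Matrix.mul_sub]

lemma mip_smul_left (A B : M2) (c : ℝ) : mip (c • A) B = c * mip A B := by
  simp [mip]

lemma mip_smul_right (A B : M2) (c : ℝ) : mip A (c • B) = c * mip A B := by
  simp [mip]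

lemma mip_self_nonneg (A : M2) : 0 ≤ mip A A := by
  rw [mip_eq_sum]
  exact Finset.sum_nonneg fun i _ => Finset.sum_nonneg fun j _ => mul_self_nonneg _

lemma eq_zero_of_mip_self_eq_zero {A : M2} (h : mip A A = 0) : A = 0 := by
  have hrow : ∀ i, 0 ≤ ∑ j, A i j * A i j :=
    fun i => Finset.sum_nonneg fun j _ => mul_self_nonneg (A i j)
  rw [mip_eq_sum, Finset.sum_eq_zero_iff_of_nonneg fun i _ => hrow i] at h
  ext i j
  have hi := h i (Finset.mem_univ i)
  rw [Finset.sum_eq_zero_iff_of_nonneg fun j _ => mul_self_nonneg (A i j)] at hi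
  exact mul_self_eq_zero.mp (hi j (Finset.mem_univ j))

lemma mip_cofm_comm (A B : M2) : mip A (cofm B) = mip B (cofm A) := by
  simp only [mip_eq, cofm, of_apply, cons_val', cons_val_zero, cons_val_one, cons_val_fin_one]
  ring

lemma mip_cofm_self (A : M2) : mip A (cofm A) = 2 * A.det := by
  simp only [mip_eq, cofm, det_fin_two, of_apply, cons_val', cons_val_zero, cons_val_one,
    cons_val_fin_one]
  ring

lemma mip_cofm_cofm (A : M2) : mip (cofm A) (cofm A) = mip A A := by
  simp only [mip_eq, cofm, of_apply, cons_val', cons_val_zero, cons_val_one, cons_val_fin_one]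
  ring

def cofmLinear : M2 →ₗ[ℝ] M2 where
  toFun := cofm
  map_add' A B := by ext i j; fin_cases i <;> fin_cases j <;> simp [cofm, add_comm]
  map_smul' c A := by ext i j; fin_cases i <;> fin_cases j <;> simp [cofm]

lemma Zm_mul_sub_mul_Zm (A : M2) :
    Zm * A - A * Zm = !![-(A 0 1 + A 1 0), A 0 0 - A 1 1; A 0 0 - A 1 1, A 0 1 + A 1 0] := by
  ext i j
  fin_cases i <;> fin_cases j <;>
    simp [Zm, mul_apply, Fin.sum_univ_two, vecMul, dotProduct] <;> ring

lemma X2_eq (A B : M2) : X2 A B =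
    (1/2) * ((A 0 0 - A 1 1) * (B 0 1 + B 1 0) - (A 0 1 + A 1 0) * (B 0 0 - B 1 1)) := by
  simp only [X2, mip_eq, Zm_mul_sub_mul_Zm, of_apply, cons_val', cons_val_zero, cons_val_one,
    cons_val_fin_one]
  ring

lemma mip_Zm_mul_sub_mul_Zm_self (B : M2) : mip (Zm * B - B * Zm) B = 0 := by
  simp only [mip_eq, Zm_mul_sub_mul_Zm, of_apply, cons_val', cons_val_zero, cons_val_one,
    cons_val_fin_one]
  ring

lemma mip_Zm_mul_sub_mul_Zm_cofm (A : M2) : mip (Zm * A - A * Zm) (cofm A) = 0 := by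
  simp only [mip_eq, cofm, Zm_mul_sub_mul_Zm, of_apply, cons_val', cons_val_zero, cons_val_one,
    cons_val_fin_one]
  ring

lemma isSO.mip_self {U : M2} (hU : isSO U) : mip U U = 2 := by
  rw [mip, ← hU.2, nonsing_inv_mul _ (by rw [hU.1]; exact isUnit_one), trace_one]
  simp

/-- For `A = 0` the junk value `Lam κ 0 B = 0` is harmless: then `cofm A = 0`. -/
lemma mip_cofm_mul_Lam_sub_eq_zero (κ : ℝ) (A B : M2) :
    mip B (cofm A) * (Lam κ A B * mip A A - 2 * (κ - B.det)) = 0 := by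
  by_cases hA : mip A A = 0
  · simp [eq_zero_of_mip_self_eq_zero hA, mip_eq, cofm]
  · rw [Lam, div_mul_cancel₀ _ hA, sub_self, mul_zero]

lemma X1_nonneg {κ : ℝ} (hκ : 0 ≤ κ) (A B : M2) : 0 ≤ X1 κ A B := by
  unfold X1
  have := mip_self_nonneg A
  have := mip_self_nonneg B
  positivity

lemma X1_pos_of_X2_ne_zero {κ : ℝ} (hκ : 0 ≤ κ) {A B : M2} (h : X2 A B ≠ 0) :
    0 < X1 κ A B := by
  refine (X1_nonneg hκ A B).lt_of_ne fun h0 => h ?_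
  have hB : mip B B = 0 := by
    have := mip_self_nonneg A
    have := mip_self_nonneg B
    unfold X1 at h0
    nlinarith
  simp [X2, eq_zero_of_mip_self_eq_zero hB, mip]

lemma X2_sq_le_of_det_eq_one {κ : ℝ} (hκ : 0 ≤ κ) {A : M2} (hA : A.det = 1) (B : M2) :
    X2 A B ^ 2 ≤ 2 * X1 κ A B * ((1/2) * mip A A - 1) := by
  set p := (A 0 0 - A 1 1) ^ 2 + (A 0 1 + A 1 0) ^ 2
  have hp : (1/2) * mip A A - 1 = p / 2 := by
    rw [det_fin_two] at hA
    rw [mip_eq]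
    linear_combination hA
  have hq : (B 0 0 - B 1 1) ^ 2 + (B 0 1 + B 1 0) ^ 2 ≤ 2 * mip B B := by
    rw [mip_eq]
    nlinarith [sq_nonneg (B 0 0 + B 1 1), sq_nonneg (B 0 1 - B 1 0)]
  have hX1 : mip B B ≤ 2 * X1 κ A B := by
    have := mul_nonneg hκ (mip_self_nonneg A)
    unfold X1
    linarith
  rw [hp, X2_eq]
  calc ((1/2) * ((A 0 0 - A 1 1) * (B 0 1 + B 1 0) - (A 0 1 + A 1 0) * (B 0 0 - B 1 1))) ^ 2
      ≤ (1/4) * (p * ((B 0 0 - B 1 1) ^ 2 + (B 0 1 + B 1 0) ^ 2)) := by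
        nlinarith [sq_nonneg
          ((A 0 0 - A 1 1) * (B 0 0 - B 1 1) + (A 0 1 + A 1 0) * (B 0 1 + B 1 0))]
    _ ≤ (1/4) * (p * (2 * (2 * X1 κ A B))) := by gcongr; linarith
    _ = 2 * X1 κ A B * (p / 2) := by ring

lemma HasDerivAt.linearMap {f : ℝ → M2} {f' : M2} {t : ℝ} (L : M2 →ₗ[ℝ] M2)
    (hf : HasDerivAt f f' t) : HasDerivAt (fun s => L (f s)) (L f') t :=
  (LinearMap.toContinuousLinearMap L).hasFDerivAt.comp_hasDerivAt t hf

lemma HasDerivAt.mip {f g : ℝ → M2} {f' g' : M2} {t : ℝ} (hf : HasDerivAt f f' t)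
    (hg : HasDerivAt g g' t) :
    HasDerivAt (fun s => mip (f s) (g s)) (mip f' (g t) + mip (f t) g') t := by
  have entry : ∀ {h : ℝ → M2} {h' : M2}, HasDerivAt h h' t → ∀ i j,
      HasDerivAt (fun s => h s i j) (h' i j) t :=
    fun hh i j => hasDerivAt_pi.1 (hasDerivAt_pi.1 hh i) j
  simp only [mip_eq_sum, ← Finset.sum_add_distrib]
  exact .fun_sum fun i _ => .fun_sum fun j _ => (entry hf i j).mul (entry hg i j)

lemma HasDerivAt.cofm {f : ℝ → M2} {f' : M2} {t : ℝ} (hf : HasDerivAt f f' t) :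
    HasDerivAt (fun s => cofm (f s)) (cofm f') t :=
  hf.linearMap cofmLinear

lemma HasDerivAt.det {f : ℝ → M2} {f' : M2} {t : ℝ} (hf : HasDerivAt f f' t) :
    HasDerivAt (fun s => (f s).det) (_root_.mip f' (_root_.cofm (f t))) t := by
  have h := (hf.mip hf.cofm).const_mul (1/2)
  simp only [mip_cofm_self, mip_cofm_comm (f t) f'] at h
  simpa [← two_mul] using h

def IsSolution (κ : ℝ) (A : ℝ → M2) : Prop :=
  ContDiff ℝ 2 A ∧ ∀ t, deriv (deriv A) t + κ • A t = Lam κ (A t) (deriv A t) • cofm (A t)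

namespace IsSolution

variable {κ : ℝ} {A : ℝ → M2}

lemma hasDerivAt (h : IsSolution κ A) (t : ℝ) : HasDerivAt A (deriv A t) t :=
  ((h.1.differentiable (by norm_num)) t).hasDerivAt

lemma hasDerivAt_deriv (h : IsSolution κ A) (t : ℝ) :
    HasDerivAt (deriv A) (deriv (deriv A) t) t :=
  (h.1.differentiable_deriv_two t).hasDerivAt

lemma deriv_deriv_eq (h : IsSolution κ A) (t : ℝ) :
    deriv (deriv A) t = Lam κ (A t) (deriv A t) • cofm (A t) - κ • A t :=
  eq_sub_of_add_eq (h.2 t)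

lemma hasDerivAt_energy (h : IsSolution κ A) (t : ℝ) :
    HasDerivAt (fun s => mip (deriv A s) (cofm (A s)) ^ 2 + 2 * κ * ((A s).det - 1) ^ 2) 0 t := by
  have hw := (h.hasDerivAt_deriv t).mip (h.hasDerivAt t).cofm
  have hu := (h.hasDerivAt t).det
  refine ((hw.pow 2).add (((hu.sub_const 1).pow 2).const_mul (2 * κ))).congr_deriv ?_
  rw [h.deriv_deriv_eq t, mip_sub_left, mip_smul_left, mip_smul_left, mip_cofm_cofm,
    mip_cofm_self, mip_cofm_self]
  linear_combination 2 * mip_cofm_mul_Lam_sub_eq_zero κ (A t) (deriv A t)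

lemma mip_deriv_cofm_eq_zero (h : IsSolution κ A) (hκ : 0 ≤ κ) (hdet : (A 0).det = 1)
    (htan : mip (deriv A 0) (cofm (A 0)) = 0) (t : ℝ) :
    mip (deriv A t) (cofm (A t)) = 0 := by
  have hE := is_const_of_deriv_eq_zero (fun s => (h.hasDerivAt_energy s).differentiableAt)
    (fun s => (h.hasDerivAt_energy s).deriv) t 0
  rw [hdet, htan] at hE
  have hpot : 0 ≤ 2 * κ * ((A t).det - 1) ^ 2 := by positivity
  exact pow_eq_zero_iff two_ne_zero |>.mp (by linarith [sq_nonneg (mip (deriv A t) (cofm (A t)))])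

lemma det_eq_one (h : IsSolution κ A) (hκ : 0 ≤ κ) (hdet : (A 0).det = 1)
    (htan : mip (deriv A 0) (cofm (A 0)) = 0) (t : ℝ) : (A t).det = 1 :=
  hdet ▸ is_const_of_deriv_eq_zero (fun s => (h.hasDerivAt s).det.differentiableAt)
    (fun s => (h.hasDerivAt s).det.deriv.trans (h.mip_deriv_cofm_eq_zero hκ hdet htan s)) t 0

lemma hasDerivAt_X1 (h : IsSolution κ A) (t : ℝ) :
    HasDerivAt (fun s => X1 κ (A s) (deriv A s))
      (Lam κ (A t) (deriv A t) * mip (deriv A t) (cofm (A t))) t := by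
  have hV := (h.hasDerivAt_deriv t).mip (h.hasDerivAt_deriv t)
  have hA := (h.hasDerivAt t).mip (h.hasDerivAt t)
  refine ((hV.const_mul (1/2)).add (hA.const_mul (κ/2))).congr_deriv ?_
  rw [mip_comm (deriv (deriv A) t), h.deriv_deriv_eq t, mip_sub_right, mip_smul_right,
    mip_smul_right, mip_comm (A t)]
  ring

lemma hasDerivAt_X2 (h : IsSolution κ A) (t : ℝ) :
    HasDerivAt (fun s => X2 (A s) (deriv A s)) 0 t := by
  have hC := (h.hasDerivAt t).linearMap (LinearMap.mulLeft ℝ Zm - LinearMap.mulRight ℝ Zm)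
  simp only [LinearMap.sub_apply, LinearMap.mulLeft_apply, LinearMap.mulRight_apply] at hC
  refine ((hC.mip (h.hasDerivAt_deriv t)).const_mul (1/2)).congr_deriv ?_
  rw [h.deriv_deriv_eq t, mip_sub_right, mip_smul_right, mip_smul_right,
    mip_Zm_mul_sub_mul_Zm_self, mip_Zm_mul_sub_mul_Zm_self, mip_Zm_mul_sub_mul_Zm_cofm]
  ring

lemma X1_eq_initial (h : IsSolution κ A) (hκ : 0 ≤ κ) (hdet : (A 0).det = 1)
    (htan : mip (deriv A 0) (cofm (A 0)) = 0) (t : ℝ) :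
    X1 κ (A t) (deriv A t) = X1 κ (A 0) (deriv A 0) :=
  is_const_of_deriv_eq_zero (fun s => (h.hasDerivAt_X1 s).differentiableAt)
    (fun s => by rw [(h.hasDerivAt_X1 s).deriv, h.mip_deriv_cofm_eq_zero hκ hdet htan s, mul_zero])
    t 0

lemma X2_eq_initial (h : IsSolution κ A) (t : ℝ) :
    X2 (A t) (deriv A t) = X2 (A 0) (deriv A 0) :=
  is_const_of_deriv_eq_zero (fun s => (h.hasDerivAt_X2 s).differentiableAt)
    (fun s => (h.hasDerivAt_X2 s).deriv) t 0

end IsSolution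

/-- when X₂ ≠ 0, solutions are uniformly bounded away from SO(2,ℝ). -/
theorem bounded_away_from_so2 (κ : ℝ) (hκ : 0 ≤ κ) (A₀ B₀ : M2)
    (hdet : A₀.det = 1) (htan : mip B₀ (cofm A₀) = 0) (hX2 : X2 A₀ B₀ ≠ 0)
    (A : ℝ → M2) (hA : ContDiff ℝ 2 A)
    (hA0 : A 0 = A₀) (hB0 : deriv A 0 = B₀)
    (hode : ∀ t : ℝ, deriv (deriv A) t + κ • A t
      = Lam κ (A t) (deriv A t) • cofm (A t)) :
    ∀ t : ℝ, X2 A₀ B₀ ^ 2 / (2 * X1 κ A₀ B₀) ≤ (1/2) * mip (A t) (A t) - 1 ∧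
      0 < X2 A₀ B₀ ^ 2 / (2 * X1 κ A₀ B₀) ∧ ¬ isSO (A t) := by
  have hsol : IsSolution κ A := ⟨hA, hode⟩
  subst hA0 hB0
  have hX1 := X1_pos_of_X2_ne_zero hκ hX2
  intro t
  have key := X2_sq_le_of_det_eq_one hκ (hsol.det_eq_one hκ hdet htan t) (deriv A t)
  rw [hsol.X1_eq_initial hκ hdet htan t, hsol.X2_eq_initial t] at key
  have hbound : X2 (A 0) (deriv A 0) ^ 2 / (2 * X1 κ (A 0) (deriv A 0))
      ≤ (1/2) * mip (A t) (A t) - 1 := by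
    rw [div_le_iff₀ (by positivity)]
    linarith
  have hpos : 0 < X2 (A 0) (deriv A 0) ^ 2 / (2 * X1 κ (A 0) (deriv A 0)) := by positivity
  refine ⟨hbound, hpos, fun hSO => ?_⟩
  rw [hSO.mip_self] at hbound
  linarith
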